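/- arXiv:0902.3842 — 4 statements merged into one kernel-verified Lean document; each statement's English description precedes it below -/
import Mathlib

section
/- Let U, V ⊆ ℂ be domains, K ⊆ U compact, and φ : U → V an injective holomorphic map. For ξ ∈ K and r > 0 small, let E(ξ,r) = φ(D(ξ,r)) and ρ(r) = |φ'(ξ)| r. Then the Lebesgue measure of the symmetric difference E(ξ,r) Δ D(φ(ξ), ρ(r)) is O(r³) as r → 0, uniformly in ξ ∈ K; i.e., there exist constants C, r₀ > 0 such that |E(ξ,r) Δ D(φ(ξ),ρ(r))| ≤ C r³ for all ξ ∈ K and 0 < r ≤ r₀. -/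
/-!
With `b` a bound for `|φ''|` near `K`, Taylor's formula gives
`| |φ z - φ ξ| - |φ'(ξ)| |z - ξ| | ≤ b r²` on the closed disk `D̄(ξ, r)`. So `φ(D(ξ, r))` lies in
the disk of radius `ρ + b r²` about `φ ξ`, while `φ` maps the circle `|z - ξ| = r` outside the disk
of radius `ρ - b r²`. By the open mapping theorem `φ(D(ξ, r))` is open, and its boundary lies in
the image of the circle, so the connected smaller disk, which meets it at `φ ξ`, lies inside it.
Thus the symmetric difference lies in an annulus of width `2 b r²` around a circle of radius
`ρ = |φ'(ξ)| r`, whose area is `O(ρ r²) = O(r³)`.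
-/

open MeasureTheory Metric Set Real

theorem Convex.norm_image_sub_sub_smul_deriv_le {𝕜 E : Type*} [RCLike 𝕜] [NormedAddCommGroup E]
    [NormedSpace 𝕜 E] {f : 𝕜 → E} {s : Set 𝕜} {b : ℝ} {x y : 𝕜} (hs : Convex ℝ s)
    (hf : ∀ z ∈ s, DifferentiableAt 𝕜 f z) (hf' : ∀ z ∈ s, DifferentiableAt 𝕜 (deriv f) z)
    (hb : ∀ z ∈ s, ‖deriv (deriv f) z‖ ≤ b) (hx : x ∈ s) (hy : y ∈ s) :
    ‖f y - f x - (y - x) • deriv f x‖ ≤ b * ‖y - x‖ ^ 2 := by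
  -- On `t` the bound `‖deriv f z - deriv f x‖ ≤ b ‖z - x‖` is uniformly at most `b ‖y - x‖`.
  set t := closedBall x ‖y - x‖ ∩ s
  have ht : Convex ℝ t := (convex_closedBall _ _).inter hs
  have hxt : x ∈ t := ⟨mem_closedBall_self (norm_nonneg _), hx⟩
  have hyt : y ∈ t := ⟨by rw [mem_closedBall, dist_eq_norm], hy⟩
  have hb0 : 0 ≤ b := (norm_nonneg _).trans (hb x hx)
  have hderiv : ∀ z ∈ t, ‖deriv f z - deriv f x‖ ≤ b * ‖y - x‖ := fun z hz =>
    calc ‖deriv f z - deriv f x‖ ≤ b * ‖z - x‖ :=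
          ht.norm_image_sub_le_of_norm_deriv_le (fun w hw => hf' w hw.2)
            (fun w hw => hb w hw.2) hxt hz
      _ ≤ b * ‖y - x‖ := by gcongr; exact mem_closedBall_iff_norm.1 hz.1
  have hremainder : ∀ z ∈ t, HasDerivWithinAt (fun w => f w - (w - x) • deriv f x)
      (deriv f z - deriv f x) t z := fun z hz => by
    have := (hf z hz.2).hasDerivAt.sub (((hasDerivAt_id z).sub_const x).smul_const (deriv f x))
    rw [one_smul] at this
    exact this.hasDerivWithinAt
  calc ‖f y - f x - (y - x) • deriv f x‖
      = ‖(f y - (y - x) • deriv f x) - (f x - (x - x) • deriv f x)‖ := by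
        rw [sub_self, zero_smul, sub_zero, sub_right_comm]
    _ ≤ b * ‖y - x‖ * ‖y - x‖ :=
        ht.norm_image_sub_le_of_norm_hasDerivWithin_le hremainder hderiv hxt hyt
    _ = b * ‖y - x‖ ^ 2 := by ring

theorem AnalyticOnNhd.isOpen_image_of_injOn {E : Type*} [NormedAddCommGroup E] [NormedSpace ℂ E]
    [Nontrivial E] {f : E → ℂ} {U : Set E} (hf : AnalyticOnNhd ℂ f U) (hinj : InjOn f U)
    (hU : IsOpen U) : IsOpen (f '' U) := by
  refine isOpen_iff_mem_nhds.2 ?_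
  rintro _ ⟨z, hz, rfl⟩
  obtain ⟨ε, hε, hball⟩ := Metric.isOpen_iff.1 hU z hz
  rcases (hf.mono hball).is_constant_or_isOpen (convex_ball z ε).isPreconnected with
    ⟨w, hw⟩ | hopen
  · have hsingleton : ball z ε = {z} :=
      Subsingleton.eq_singleton_of_mem (fun a ha c hc =>
        hinj (hball ha) (hball hc) ((hw a ha).trans (hw c hc).symm)) (mem_ball_self hε)
    exact absurd (hsingleton ▸ isOpen_ball) (not_isOpen_singleton z)
  · exact Filter.mem_of_superset ((hopen _ subset_rfl isOpen_ball).mem_nhds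
      (mem_image_of_mem f (mem_ball_self hε))) (image_mono hball)

theorem ball_subset_image_ball_of_le_dist_sphere {X Y : Type*} [PseudoMetricSpace X]
    [ProperSpace X] [NormedAddCommGroup Y] [NormedSpace ℝ Y] {f : X → Y} {x : X} {r s : ℝ}
    (hr : 0 < r) (hopen : IsOpen (f '' ball x r)) (hcont : ContinuousOn f (closedBall x r))
    (hsphere : ∀ z ∈ sphere x r, s ≤ dist (f z) (f x)) : ball (f x) s ⊆ f '' ball x r := by
  rcases le_or_gt s 0 with hs | hs
  · simp [ball_eq_empty.2 hs]
  refine (convex_ball (f x) s).isPreconnected.subset_of_closure_inter_subset hopen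
    ⟨f x, mem_ball_self hs, mem_image_of_mem f (mem_ball_self hr)⟩ ?_
  rintro _ ⟨hy, hys⟩
  have hclosure : closure (f '' ball x r) ⊆ f '' closedBall x r :=
    closure_minimal (image_mono ball_subset_closedBall)
      ((isCompact_closedBall x r).image_of_continuousOn hcont).isClosed
  obtain ⟨z, hz, rfl⟩ := hclosure hy
  rcases (mem_closedBall.1 hz).lt_or_eq with hlt | heq
  · exact mem_image_of_mem f hlt
  · exact absurd (hsphere z heq) (not_le.2 (mem_ball.1 hys))

theorem symmDiff_ball_subset_closedBall_diff_ball {X : Type*} [PseudoMetricSpace X] {A : Set X}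
    {c : X} {ρ δ : ℝ} (hδ : 0 ≤ δ) (hin : ball c (ρ - δ) ⊆ A) (hout : A ⊆ closedBall c (ρ + δ)) :
    symmDiff A (ball c ρ) ⊆ closedBall c (ρ + δ) \ ball c (ρ - δ) := by
  intro y hy
  rcases mem_symmDiff.1 hy with ⟨hA, hy⟩ | ⟨hy, hA⟩
  · exact ⟨hout hA, fun h => hy (ball_subset_ball (by linarith) h)⟩
  · exact ⟨ball_subset_closedBall (ball_subset_ball (by linarith) hy), fun h => hA (hin h)⟩

theorem Complex.volume_closedBall_diff_ball_le (c : ℂ) {ρ δ : ℝ} (hρ : 0 ≤ ρ) (hδ : 0 ≤ δ) :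
    volume (closedBall c (ρ + δ) \ ball c (ρ - δ)) ≤ ENNReal.ofReal (4 * π * δ * (ρ + δ)) := by
  have hdisk : ∀ t, 0 ≤ t → ENNReal.ofReal t ^ 2 * NNReal.pi = ENNReal.ofReal (π * t ^ 2) :=
    fun t ht => by
      rw [← ENNReal.ofReal_pow ht, ← ENNReal.ofReal_coe_nnreal, NNReal.coe_real_pi,
        ← ENNReal.ofReal_mul (by positivity), mul_comm]
  rcases le_total ρ δ with h | h
  · calc volume (closedBall c (ρ + δ) \ ball c (ρ - δ))
        ≤ volume (closedBall c (ρ + δ)) := measure_mono sdiff_subset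
      _ = ENNReal.ofReal (π * (ρ + δ) ^ 2) := by
        rw [Complex.volume_closedBall, hdisk _ (by positivity)]
      _ ≤ _ := ENNReal.ofReal_le_ofReal <| by
        nlinarith [mul_nonneg (mul_nonneg pi_pos.le (add_nonneg hρ hδ))
          (by linarith : 0 ≤ 3 * δ - ρ)]
  · rw [measure_sdiff (ball_subset_closedBall.trans (closedBall_subset_closedBall (by linarith)))
      measurableSet_ball.nullMeasurableSet measure_ball_lt_top.ne, Complex.volume_closedBall,
      Complex.volume_ball, hdisk _ (by positivity), hdisk _ (by linarith),
      ← ENNReal.ofReal_sub _ (by positivity)]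
    exact ENNReal.ofReal_le_ofReal (by nlinarith [mul_nonneg pi_pos.le (sq_nonneg δ)])

theorem volume_symmDiff_image_ball_le {φ : ℂ → ℂ} {ξ : ℂ} {r b : ℝ} (hr : 0 < r)
    (hφ : AnalyticOnNhd ℂ φ (closedBall ξ r)) (hinj : InjOn φ (ball ξ r))
    (hb : ∀ z ∈ closedBall ξ r, ‖deriv (deriv φ) z‖ ≤ b) :
    volume (symmDiff (φ '' ball ξ r) (ball (φ ξ) (‖deriv φ ξ‖ * r)))
      ≤ ENNReal.ofReal (4 * π * (b * r ^ 2) * (‖deriv φ ξ‖ * r + b * r ^ 2)) := by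
  have hb0 : 0 ≤ b := (norm_nonneg _).trans (hb ξ (mem_closedBall_self hr.le))
  have hdist : ∀ z ∈ closedBall ξ r,
      |dist (φ z) (φ ξ) - ‖deriv φ ξ‖ * dist z ξ| ≤ b * r ^ 2 := by
    intro z hz
    rw [dist_eq_norm, dist_eq_norm, mul_comm, ← norm_smul]
    calc |‖φ z - φ ξ‖ - ‖(z - ξ) • deriv φ ξ‖| ≤ ‖φ z - φ ξ - (z - ξ) • deriv φ ξ‖ :=
          abs_norm_sub_norm_le _ _
      _ ≤ b * ‖z - ξ‖ ^ 2 :=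
          (convex_closedBall ξ r).norm_image_sub_sub_smul_deriv_le
            (fun w hw => (hφ w hw).differentiableAt) (fun w hw => (hφ.deriv w hw).differentiableAt)
            hb (mem_closedBall_self hr.le) hz
      _ ≤ b * r ^ 2 := by gcongr; exact mem_closedBall_iff_norm.1 hz
  have hout : φ '' ball ξ r ⊆ closedBall (φ ξ) (‖deriv φ ξ‖ * r + b * r ^ 2) := by
    rintro _ ⟨z, hz, rfl⟩
    have hz' := (abs_le.1 (hdist z (ball_subset_closedBall hz))).2
    have : ‖deriv φ ξ‖ * dist z ξ ≤ ‖deriv φ ξ‖ * r := by gcongr; exact (mem_ball.1 hz).le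
    rw [mem_closedBall]
    linarith
  have hin : ball (φ ξ) (‖deriv φ ξ‖ * r - b * r ^ 2) ⊆ φ '' ball ξ r := by
    refine ball_subset_image_ball_of_le_dist_sphere hr
      ((hφ.mono ball_subset_closedBall).isOpen_image_of_injOn hinj isOpen_ball)
      hφ.continuousOn fun w hw => ?_
    have hw' := (abs_le.1 (hdist w (sphere_subset_closedBall hw))).1
    rw [mem_sphere.1 hw] at hw'
    linarith
  calc _ ≤ volume (closedBall (φ ξ) (‖deriv φ ξ‖ * r + b * r ^ 2)
        \ ball (φ ξ) (‖deriv φ ξ‖ * r - b * r ^ 2)) :=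
        measure_mono (symmDiff_ball_subset_closedBall_diff_ball (by positivity) hin hout)
    _ ≤ _ := Complex.volume_closedBall_diff_ball_le _ (by positivity) (by positivity)

theorem conformal_image_symmDiff_disk_cubic_general
    (U : Set ℂ) (hU : IsOpen U)
    (K : Set ℂ) (hK : IsCompact K) (hKU : K ⊆ U)
    (φ : ℂ → ℂ) (hφ : DifferentiableOn ℂ φ U) (hinj : Set.InjOn φ U) :
    ∃ C > 0, ∃ r₀ > 0, ∀ ξ ∈ K, ∀ r : ℝ, 0 < r → r ≤ r₀ →
      volume (symmDiff (φ '' Metric.ball ξ r)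
          (Metric.ball (φ ξ) (‖deriv φ ξ‖ * r)))
        ≤ ENNReal.ofReal (C * r ^ 3) := by
  have hA : AnalyticOnNhd ℂ φ U := hφ.analyticOnNhd hU
  obtain ⟨r₀, hr₀, hthick⟩ := hK.exists_cthickening_subset_open hU hKU
  obtain ⟨M, hM0, hM⟩ := (hK.image_of_continuousOn
    (hA.deriv.continuousOn.mono hKU)).isBounded.exists_pos_norm_le
  obtain ⟨b, hb0, hb⟩ := (hK.cthickening.image_of_continuousOn
    (hA.deriv.deriv.continuousOn.mono hthick)).isBounded.exists_pos_norm_le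
  refine ⟨4 * π * b * (M + b * r₀), by positivity, r₀, hr₀, fun ξ hξ r hr hrr₀ => ?_⟩
  have hball : closedBall ξ r ⊆ cthickening r₀ K :=
    (closedBall_subset_closedBall hrr₀).trans (closedBall_subset_cthickening hξ r₀)
  calc _ ≤ ENNReal.ofReal (4 * π * (b * r ^ 2) * (‖deriv φ ξ‖ * r + b * r ^ 2)) :=
        volume_symmDiff_image_ball_le hr (hA.mono (hball.trans hthick))
          (hinj.mono (ball_subset_closedBall.trans (hball.trans hthick)))
          fun z hz => hb _ (mem_image_of_mem _ (hball hz))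
    _ = ENNReal.ofReal (4 * π * b * (‖deriv φ ξ‖ + b * r) * r ^ 3) := by congr 1; ring
    _ ≤ ENNReal.ofReal (4 * π * b * (M + b * r₀) * r ^ 3) := by
        gcongr
        exact hM _ (mem_image_of_mem _ hξ)

theorem conformal_image_symmDiff_disk_cubic
    (U V : Set ℂ) (hU : IsOpen U) (hV : IsOpen V)
    (K : Set ℂ) (hK : IsCompact K) (hKU : K ⊆ U)
    (φ : ℂ → ℂ) (hφ : DifferentiableOn ℂ φ U) (hinj : Set.InjOn φ U)
    (hmap : Set.MapsTo φ U V) :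
    ∃ C > 0, ∃ r₀ > 0, ∀ ξ ∈ K, ∀ r : ℝ, 0 < r → r ≤ r₀ →
      volume (symmDiff (φ '' Metric.ball ξ r)
          (Metric.ball (φ ξ) (‖deriv φ ξ‖ * r)))
        ≤ ENNReal.ofReal (C * r ^ 3) :=
  conformal_image_symmDiff_disk_cubic_general U hU K hK hKU φ hφ hinj
end

section
/- Let U, V ⊆ ℂ be domains, K ⊆ U compact with D(ξ,r₀) ⊆ U for all ξ ∈ K, and φ : U → V conformal. Then there exist constants C, r₁ > 0 such that for all ξ ∈ K and 0 < r ≤ r₁: D(φ(ξ), |φ'(ξ)|r − Cr²) ⊆ φ(D(ξ,r)) ⊆ D(φ(ξ), |φ'(ξ)|r + Cr²). -/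
/-!
Since `φ` is holomorphic on `U`, its second derivative is bounded, say by `M`, on the compact
set `cthickening (r₀ / 2) K ⊆ U`. By the mean value inequality, `φ` is then approximated on
`closedBall ξ r` by its derivative at `ξ` up to a Lipschitz error of constant `M r`. The outer
inclusion is the triangle inequality; the inner one is the surjectivity statement of the inverse
function theorem for maps approximated by an invertible linear map.
-/

open Set Metric ContinuousLinearMap

theorem Metric.cthickening_subset_of_forall_ball_subset {α : Type*} [PseudoMetricSpace α]
    {K U : Set α} {δ r : ℝ} (hr : 0 < r) (hδ : δ < r) (h : ∀ x ∈ K, ball x r ⊆ U) :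
    cthickening δ K ⊆ U := by
  refine (cthickening_subset_thickening' hr hδ K).trans ?_
  rw [thickening_eq_biUnion_ball]
  exact iUnion₂_subset h

section MeanValue

variable {𝕜 E F : Type*} [NontriviallyNormedField 𝕜] [IsRCLikeNormedField 𝕜]
  [NormedAddCommGroup E] [NormedSpace ℝ E] [NormedSpace 𝕜 E]
  [NormedAddCommGroup F] [NormedSpace 𝕜 F]

theorem approximatesLinearOn_closedBall_of_norm_fderiv_fderiv_le {f : E → F} {ξ : E} {r : ℝ}
    {M : NNReal} (hf : ∀ z ∈ closedBall ξ r, DifferentiableAt 𝕜 f z)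
    (hf' : ∀ z ∈ closedBall ξ r, DifferentiableAt 𝕜 (fderiv 𝕜 f) z)
    (hM : ∀ z ∈ closedBall ξ r, ‖fderiv 𝕜 (fderiv 𝕜 f) z‖ ≤ M) :
    ApproximatesLinearOn f (fderiv 𝕜 f ξ) (closedBall ξ r) (M * r.toNNReal) := by
  have hlip : ∀ z ∈ closedBall ξ r, ‖fderiv 𝕜 f z - fderiv 𝕜 f ξ‖ ≤ M * r.toNNReal := by
    intro z hz
    calc ‖fderiv 𝕜 f z - fderiv 𝕜 f ξ‖ ≤ M * ‖z - ξ‖ :=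
          (convex_closedBall ξ r).norm_image_sub_le_of_norm_fderiv_le hf' hM
            (mem_closedBall_self (dist_nonneg.trans hz)) hz
      _ ≤ M * r.toNNReal := by
          gcongr
          exact (mem_closedBall_iff_norm.1 hz).trans (Real.le_coe_toNNReal r)
  intro x hx y hy
  push_cast
  exact (convex_closedBall ξ r).norm_image_sub_le_of_norm_fderiv_le' hf hlip hy hx

end MeanValue

section InverseFunction

variable {𝕜 E F : Type*} [NontriviallyNormedField 𝕜]
  [NormedAddCommGroup E] [NormedSpace 𝕜 E] [NormedAddCommGroup F] [NormedSpace 𝕜 F]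
  {f : E → F} {f' : E →L[𝕜] F} {s : Set E} {c : NNReal} {b : E} {r : ℝ}

theorem ApproximatesLinearOn.mapsTo_closedBall (hf : ApproximatesLinearOn f f' s c)
    (hs : closedBall b r ⊆ s) : MapsTo f (closedBall b r) (closedBall (f b) ((‖f'‖ + c) * r)) := by
  intro x hx
  have hb : b ∈ s := hs (mem_closedBall_self (dist_nonneg.trans hx))
  have hxb : ‖x - b‖ ≤ r := mem_closedBall_iff_norm.1 hx
  rw [mem_closedBall_iff_norm]
  calc ‖f x - f b‖ ≤ ‖f x - f b - f' (x - b)‖ + ‖f' (x - b)‖ := norm_le_norm_sub_add _ _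
    _ ≤ c * ‖x - b‖ + ‖f'‖ * ‖x - b‖ := add_le_add (hf _ (hs hx) _ hb) (f'.le_opNorm _)
    _ ≤ (‖f'‖ + c) * r := by rw [← add_mul, add_comm]; gcongr

theorem ApproximatesLinearOn.ball_subset_image_ball [CompleteSpace E]
    (hf : ApproximatesLinearOn f f' (ball b r) c) (f'symm : f'.NonlinearRightInverse)
    (hr : 0 ≤ r) : ball (f b) (((f'symm.nnnorm : ℝ)⁻¹ - c) * r) ⊆ f '' ball b r := by
  intro w hw
  set k : ℝ := (f'symm.nnnorm : ℝ)⁻¹ - c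
  have hwr : dist w (f b) < k * r := mem_ball.1 hw
  have hk : 0 < k := pos_of_mul_pos_left (dist_nonneg.trans_lt hwr) hr
  -- `w` is covered by the image of the closed ball of radius `dist w (f b) / k < r`.
  have hε : dist w (f b) / k < r := by rwa [div_lt_iff₀' hk]
  obtain ⟨z, hz, rfl⟩ :=
    (hf.mono_set (closedBall_subset_ball hε)).surjOn_closedBall_of_nonlinearRightInverse
      f'symm (div_nonneg dist_nonneg hk.le) subset_rfl
      (by rw [mem_closedBall, mul_div_cancel₀ _ hk.ne'])
  exact ⟨z, closedBall_subset_ball hε hz, rfl⟩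

end InverseFunction

section OneDimensional

variable {𝕜 : Type*} [NontriviallyNormedField 𝕜]

noncomputable def ContinuousLinearMap.toSpanSingletonNonlinearRightInverse {a : 𝕜} (ha : a ≠ 0) :
    (toSpanSingleton 𝕜 a).NonlinearRightInverse where
  toFun y := y * a⁻¹
  nnnorm := ‖a‖₊⁻¹
  bound' y := by simp [mul_comm]
  right_inv' y := by simp [ha]

theorem ApproximatesLinearOn.ball_subset_image_ball_of_toSpanSingleton [CompleteSpace 𝕜]
    {f : 𝕜 → 𝕜} {a b : 𝕜} {c : NNReal} {r : ℝ}
    (hf : ApproximatesLinearOn f (toSpanSingleton 𝕜 a) (ball b r) c) (hr : 0 ≤ r) :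
    ball (f b) ((‖a‖ - c) * r) ⊆ f '' ball b r := by
  rcases eq_or_ne a 0 with rfl | ha
  · rw [ball_eq_empty.2 (by simp only [norm_zero, zero_sub]; nlinarith [c.coe_nonneg])]
    exact empty_subset _
  · simpa [toSpanSingletonNonlinearRightInverse] using
      hf.ball_subset_image_ball (toSpanSingletonNonlinearRightInverse ha) hr

end OneDimensional

theorem conformal_image_disk_sandwich_general
    (U : Set ℂ) (hU : IsOpen U)
    (K : Set ℂ) (hK : IsCompact K)
    (r₀ : ℝ) (hr₀ : 0 < r₀) (hball : ∀ ξ ∈ K, Metric.ball ξ r₀ ⊆ U)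
    (φ : ℂ → ℂ) (hφ : DifferentiableOn ℂ φ U) :
    ∃ C > 0, ∃ r₁ > 0, ∀ ξ ∈ K, ∀ r : ℝ, 0 < r → r ≤ r₁ →
      Metric.ball (φ ξ) (‖deriv φ ξ‖ * r - C * r ^ 2) ⊆ φ '' Metric.ball ξ r ∧
      φ '' Metric.ball ξ r ⊆ Metric.ball (φ ξ) (‖deriv φ ξ‖ * r + C * r ^ 2) := by
  have hTU : cthickening (r₀ / 2) K ⊆ U :=
    cthickening_subset_of_forall_ball_subset hr₀ (by linarith) hball
  have hφa : AnalyticOnNhd ℂ φ U := hφ.analyticOnNhd hU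
  obtain ⟨M, hM⟩ := hK.cthickening.exists_bound_of_continuousOn
    (hφa.fderiv.fderiv.continuousOn.mono hTU)
  refine ⟨M.toNNReal + 1, by positivity, r₀ / 2, by positivity, fun ξ hξ r hr hrr₀ => ?_⟩
  have hBT : closedBall ξ r ⊆ cthickening (r₀ / 2) K :=
    (closedBall_subset_cthickening hξ r).trans (cthickening_mono hrr₀ K)
  have happrox : ApproximatesLinearOn φ (toSpanSingleton ℂ (deriv φ ξ)) (closedBall ξ r)
      (M.toNNReal * r.toNNReal) := by
    rw [toSpanSingleton_deriv]
    exact approximatesLinearOn_closedBall_of_norm_fderiv_fderiv_le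
      (fun z hz => (hφa z (hTU (hBT hz))).differentiableAt)
      (fun z hz => (hφa.fderiv z (hTU (hBT hz))).differentiableAt)
      (fun z hz => (hM z (hBT hz)).trans (Real.le_coe_toNNReal M))
  have hMr : ((M.toNNReal * r.toNNReal : NNReal) : ℝ) = M.toNNReal * r := by
    push_cast; rw [Real.coe_toNNReal r hr.le]
  constructor
  · refine (ball_subset_ball ?_).trans
      ((happrox.mono_set ball_subset_closedBall).ball_subset_image_ball_of_toSpanSingleton hr.le)
    rw [hMr]; nlinarith
  · refine (image_mono ball_subset_closedBall).trans
      ((happrox.mapsTo_closedBall subset_rfl).image_subset.trans (closedBall_subset_ball ?_))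
    rw [norm_toSpanSingleton, hMr]; nlinarith

theorem conformal_image_disk_sandwich
    (U V : Set ℂ) (hU : IsOpen U) (hV : IsOpen V)
    (K : Set ℂ) (hK : IsCompact K) (hKU : K ⊆ U)
    (r₀ : ℝ) (hr₀ : 0 < r₀) (hball : ∀ ξ ∈ K, Metric.ball ξ r₀ ⊆ U)
    (φ : ℂ → ℂ) (hφ : DifferentiableOn ℂ φ U) (hinj : Set.InjOn φ U)
    (hmap : Set.MapsTo φ U V) :
    ∃ C > 0, ∃ r₁ > 0, ∀ ξ ∈ K, ∀ r : ℝ, 0 < r → r ≤ r₁ →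
      Metric.ball (φ ξ) (‖deriv φ ξ‖ * r - C * r ^ 2) ⊆ φ '' Metric.ball ξ r ∧
      φ '' Metric.ball ξ r ⊆ Metric.ball (φ ξ) (‖deriv φ ξ‖ * r + C * r ^ 2) :=
  conformal_image_disk_sandwich_general U hU K hK r₀ hr₀ hball φ hφ
end

section
/- For any compact set L ⊆ (0,1)², the double sum ∑_{1 ≤ i,j ≤ n} sin²(πix) sin²(πjy)/(i² + j²) is asymptotic to (π/8) log n as n → ∞, uniformly in (x,y) ∈ L. That is, (∑_{1 ≤ i,j ≤ n} sin²(πix)sin²(πjy)/(i²+j²)) / ((π/8) log n) → 1 uniformly for (x,y) ∈ L. -/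
/-!
Since sin² t = (1 - cos 2t) / 2, the summand is (i² + j²)⁻¹ / 4 plus terms carrying a factor
cos (2πix) or cos (2πjy). For x, y ∈ (0, 1) the partial sums of these cosines are bounded by
1 / sin (πx) and 1 / sin (πy), so Abel summation against the decreasing weights (i² + j²)⁻¹ shows
that the oscillating terms are O(1). Comparing each row with ∫ dt / (i² + t²) = arctan (t / i) / i
gives ∑_{i,j ≤ n} (i² + j²)⁻¹ = (π / 2) Hₙ + O(1) = (π / 2) log n + O(1). The O(1) bounds are
continuous in (x, y), hence bounded on the compact set L.
-/

open Filter Finset Real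

theorem Finset.sum_Icc_one_eq_sum_range {M : Type*} [AddCommMonoid M] (f : ℕ → M) (n : ℕ) :
    ∑ i ∈ Icc 1 n, f i = ∑ i ∈ range n, f (i + 1) := by
  rw [range_eq_Ico, sum_Ico_add', Ico_add_one_right_eq_Icc, zero_add]

theorem norm_sum_range_smul_le_of_antitone {E : Type*} [SeminormedAddCommGroup E]
    [NormedSpace ℝ E] {a : ℕ → ℝ} {z : ℕ → E} {B : ℝ} (ha : Antitone a) (ha₀ : ∀ i, 0 ≤ a i)
    (hz : ∀ m, ‖∑ i ∈ range m, z i‖ ≤ B) (n : ℕ) :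
    ‖∑ i ∈ range n, a i • z i‖ ≤ B * a 0 := by
  rw [sum_range_by_parts]
  calc _ ≤ ‖a (n - 1) • ∑ i ∈ range n, z i‖
        + ‖∑ i ∈ range (n - 1), (a (i + 1) - a i) • ∑ j ∈ range (i + 1), z j‖ := norm_sub_le _ _
    _ ≤ a (n - 1) * B + ∑ i ∈ range (n - 1), (a i - a (i + 1)) * B := by
      gcongr
      · rw [norm_smul, norm_of_nonneg (ha₀ _)]
        exact mul_le_mul_of_nonneg_left (hz n) (ha₀ _)
      · refine (norm_sum_le _ _).trans (sum_le_sum fun i _ => ?_)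
        rw [norm_smul, norm_of_nonpos (sub_nonpos.2 (ha i.le_succ)), neg_sub]
        exact mul_le_mul_of_nonneg_left (hz _) (sub_nonneg.2 (ha i.le_succ))
    _ = B * a 0 := by
      rw [← sum_mul, sum_range_sub' a]
      ring

theorem abs_sum_Icc_mul_le_of_antitone {a c : ℕ → ℝ} {B : ℝ} (ha : Antitone a)
    (ha₀ : ∀ i, 0 ≤ a i) (hc : ∀ m, |∑ i ∈ Icc 1 m, c i| ≤ B) (n : ℕ) :
    |∑ i ∈ Icc 1 n, c i * a i| ≤ B * a 1 := by
  simp_rw [sum_Icc_one_eq_sum_range, mul_comm (c _)] at hc ⊢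
  exact norm_sum_range_smul_le_of_antitone (z := fun i => c (i + 1))
    (fun i j h => ha (by omega)) (fun i => ha₀ _) hc n

theorem two_mul_sin_half_mul_sum_cos (θ : ℝ) (m : ℕ) :
    2 * sin (θ / 2) * ∑ i ∈ Icc 1 m, cos (i * θ) = sin ((m + 1 / 2) * θ) - sin (θ / 2) := by
  induction m with
  | zero => simp [div_eq_inv_mul]
  | succ m ih =>
    have hstep : sin ((m + 1 + 1 / 2) * θ) - sin ((m + 1 / 2) * θ)
        = 2 * sin (θ / 2) * cos ((m + 1) * θ) := by
      rw [sin_sub_sin]; ring_nf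
    rw [sum_Icc_succ_top (by omega), mul_add, ih]
    push_cast
    linarith

theorem abs_sin_half_mul_abs_sum_cos_le (θ : ℝ) (m : ℕ) :
    |sin (θ / 2)| * |∑ i ∈ Icc 1 m, cos (i * θ)| ≤ 1 := by
  have h := congrArg abs (two_mul_sin_half_mul_sum_cos θ m)
  rw [abs_mul, abs_mul, abs_two] at h
  have := abs_sub (sin ((m + 1 / 2) * θ)) (sin (θ / 2))
  linarith [abs_sin_le_one ((m + 1 / 2) * θ), abs_sin_le_one (θ / 2)]

theorem Real.sin_pi_mul_pos {x : ℝ} (hx : x ∈ Set.Ioo 0 1) : 0 < sin (π * x) :=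
  sin_pos_of_pos_of_lt_pi (mul_pos pi_pos hx.1) (by nlinarith [pi_pos, hx.2])

theorem abs_sum_cos_two_pi_mul_le {x : ℝ} (hx : x ∈ Set.Ioo 0 1) (m : ℕ) :
    |∑ i ∈ Icc 1 m, cos (i * (2 * π * x))| ≤ (sin (π * x))⁻¹ := by
  have hs := sin_pi_mul_pos hx
  have h := abs_sin_half_mul_abs_sum_cos_le (2 * π * x) m
  rw [show 2 * π * x / 2 = π * x by ring, abs_of_pos hs] at h
  rw [← one_div, le_div_iff₀ hs]
  linarith

theorem Real.arctan_le_self {x : ℝ} (hx : 0 ≤ x) : arctan x ≤ x := by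
  simpa using le_tan (arctan_nonneg.2 hx) (arctan_lt_pi_div_two x)

theorem antitoneOn_inv_sq_add_sq {c : ℝ} (hc : c ≠ 0) :
    AntitoneOn (fun t : ℝ => (c ^ 2 + t ^ 2)⁻¹) (Set.Ici 0) := fun s hs _ _ hst =>
  inv_anti₀ (by positivity) (by gcongr)

theorem sum_Icc_inv_sq_add_sq_le {c : ℝ} (hc : 0 < c) (n : ℕ) :
    ∑ j ∈ Icc 1 n, (c ^ 2 + (j : ℝ) ^ 2)⁻¹ ≤ π / 2 / c := by
  have h := ((antitoneOn_inv_sq_add_sq hc.ne').mono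
    Set.Icc_subset_Ici_self).sum_le_integral (x₀ := 0) (a := n)
  simp only [zero_add, integral_inv_sq_add_sq hc.ne', zero_div, arctan_zero, sub_zero] at h
  rw [sum_Icc_one_eq_sum_range]
  calc _ ≤ c⁻¹ * arctan (n / c) := h
    _ ≤ c⁻¹ * (π / 2) := by gcongr; exact (arctan_lt_pi_div_two _).le
    _ = π / 2 / c := by ring

theorem sum_Icc_inv_one_add_sq_le (n : ℕ) : ∑ j ∈ Icc 1 n, (1 + (j : ℝ) ^ 2)⁻¹ ≤ π / 2 := by
  simpa using sum_Icc_inv_sq_add_sq_le one_pos n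

theorem sub_le_sum_Icc_inv_sq_add_sq {c : ℝ} (hc : 0 < c) (n : ℕ) :
    π / 2 / c - ((n : ℝ) + 1)⁻¹ - (c ^ 2)⁻¹ ≤ ∑ j ∈ Icc 1 n, (c ^ 2 + (j : ℝ) ^ 2)⁻¹ := by
  have h := ((antitoneOn_inv_sq_add_sq hc.ne').mono
    ((Set.Icc_subset_Ici_iff (by linarith)).2 zero_le_one)).integral_le_sum (x₀ := 1) (a := n)
  rw [integral_inv_sq_add_sq hc.ne'] at h
  have h₁ : π / 2 - c / (n + 1) ≤ arctan ((1 + n) / c) := by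
    rw [show (1 + n) / c = (c / (n + 1))⁻¹ by rw [inv_div, add_comm],
      arctan_inv_of_pos (by positivity)]
    linarith [arctan_le_self (x := c / (n + 1)) (by positivity)]
  have h₂ := arctan_le_self (x := 1 / c) (by positivity)
  rw [sum_Icc_one_eq_sum_range]
  push_cast
  calc π / 2 / c - ((n : ℝ) + 1)⁻¹ - (c ^ 2)⁻¹ = c⁻¹ * ((π / 2 - c / (n + 1)) - 1 / c) := by
        field_simp
    _ ≤ c⁻¹ * (arctan ((1 + n) / c) - arctan (1 / c)) := by gcongr
    _ ≤ _ := h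
    _ = _ := by simp_rw [add_comm (1 : ℝ)]

theorem sum_Icc_inv_sq_le_two (n : ℕ) : ∑ i ∈ Icc 1 n, ((i : ℝ) ^ 2)⁻¹ ≤ 2 := by
  have h : Icc 1 n = Ioo 0 (n + 1) := by ext; simp; omega
  simpa [h] using sum_Ioo_inv_sq_le (α := ℝ) 0 (n + 1)

theorem abs_sum_sum_inv_sq_add_sq_sub_log_le (n : ℕ) :
    |∑ i ∈ Icc 1 n, ∑ j ∈ Icc 1 n, ((i : ℝ) ^ 2 + (j : ℝ) ^ 2)⁻¹ - π / 2 * log n| ≤ 3 := by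
  have hH : ∑ i ∈ Icc 1 n, (i : ℝ)⁻¹ = harmonic n := by simp [harmonic_eq_sum_Icc]
  have hpos : ∀ i ∈ Icc 1 n, (0 : ℝ) < i := fun i hi => by
    have := (mem_Icc.1 hi).1; positivity
  have upper : ∑ i ∈ Icc 1 n, ∑ j ∈ Icc 1 n, ((i : ℝ) ^ 2 + (j : ℝ) ^ 2)⁻¹
      ≤ π / 2 * harmonic n := by
    rw [← hH, mul_sum]
    exact sum_le_sum fun i hi => (sum_Icc_inv_sq_add_sq_le (hpos i hi) n).trans_eq (by ring)
  have lower : π / 2 * harmonic n - 3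
      ≤ ∑ i ∈ Icc 1 n, ∑ j ∈ Icc 1 n, ((i : ℝ) ^ 2 + (j : ℝ) ^ 2)⁻¹ := by
    refine le_trans ?_ (sum_le_sum fun i hi => sub_le_sum_Icc_inv_sq_add_sq (hpos i hi) n)
    have hn : (n : ℝ) * ((n : ℝ) + 1)⁻¹ ≤ 1 := by
      rw [← div_eq_mul_inv, div_le_one (by positivity)]; linarith
    simp only [sum_sub_distrib, div_eq_mul_inv (π / 2), ← mul_sum, hH, sum_const, Nat.card_Icc,
      add_tsub_cancel_right, nsmul_eq_mul]
    linarith [sum_Icc_inv_sq_le_two n]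
  have hlog : log n ≤ harmonic n := by
    refine le_trans ?_ (log_add_one_le_harmonic n)
    rcases n.eq_zero_or_pos with rfl | hn
    · simp
    · exact log_le_log (by positivity) (by push_cast; linarith)
  have h₁ : π / 2 * log n ≤ π / 2 * harmonic n := by gcongr
  have h₂ : π / 2 * harmonic n ≤ π / 2 * (1 + log n) := by gcongr; exact harmonic_le_one_add_log n
  rw [abs_le]
  constructor <;> linarith [pi_le_four]

theorem abs_sum_Icc_mul_inv_sq_add_sq_le {d : ℕ → ℝ} {B : ℝ}
    (hd : ∀ m, |∑ j ∈ Icc 1 m, d j| ≤ B) {x : ℝ} (hx : x ≠ 0) (n : ℕ) :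
    |∑ j ∈ Icc 1 n, d j * (x ^ 2 + (j : ℝ) ^ 2)⁻¹| ≤ B * (x ^ 2 + 1)⁻¹ := by
  have hpos (t : ℝ) : 0 < x ^ 2 + t ^ 2 :=
    add_pos_of_pos_of_nonneg (pow_two_pos_of_ne_zero hx) (sq_nonneg t)
  simpa using abs_sum_Icc_mul_le_of_antitone
    (fun j k hjk => inv_anti₀ (hpos j) (by gcongr)) (fun j => (inv_pos.2 (hpos j)).le) hd n

theorem abs_sum_Icc_mul_sum_Icc_inv_sq_add_sq_le {c : ℕ → ℝ} {B : ℝ}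
    (hc : ∀ m, |∑ i ∈ Icc 1 m, c i| ≤ B) (n : ℕ) :
    |∑ i ∈ Icc 1 n, c i * ∑ j ∈ Icc 1 n, ((i : ℝ) ^ 2 + (j : ℝ) ^ 2)⁻¹| ≤ B * (π / 2) := by
  have hB : 0 ≤ B := by simpa using hc 0
  refine (abs_sum_Icc_mul_le_of_antitone (fun i k hik => sum_le_sum fun j hj => ?_)
    (fun i => by positivity) hc n).trans ?_
  · have : (0 : ℝ) < j := by have := (mem_Icc.1 hj).1; positivity
    exact inv_anti₀ (by positivity) (by gcongr)
  · gcongr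
    simpa using sum_Icc_inv_one_add_sq_le n

theorem abs_sum_sum_one_sub_mul_one_sub_mul_inv_sq_add_sq_sub_le {c d : ℕ → ℝ} {Bc Bd : ℝ}
    (hc : ∀ m, |∑ i ∈ Icc 1 m, c i| ≤ Bc) (hd : ∀ m, |∑ j ∈ Icc 1 m, d j| ≤ Bd)
    (hc₁ : ∀ i, |c i| ≤ 1) (n : ℕ) :
    |∑ i ∈ Icc 1 n, ∑ j ∈ Icc 1 n, (1 - c i) * (1 - d j) * ((i : ℝ) ^ 2 + (j : ℝ) ^ 2)⁻¹
      - ∑ i ∈ Icc 1 n, ∑ j ∈ Icc 1 n, ((i : ℝ) ^ 2 + (j : ℝ) ^ 2)⁻¹|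
      ≤ π / 2 * (Bc + 2 * Bd) := by
  have hBd : 0 ≤ Bd := by simpa using hd 0
  have hsplit : ∑ i ∈ Icc 1 n, ∑ j ∈ Icc 1 n, (1 - c i) * (1 - d j) * ((i : ℝ) ^ 2 + (j : ℝ) ^ 2)⁻¹
      - ∑ i ∈ Icc 1 n, ∑ j ∈ Icc 1 n, ((i : ℝ) ^ 2 + (j : ℝ) ^ 2)⁻¹
      = -(∑ i ∈ Icc 1 n, c i * ∑ j ∈ Icc 1 n, ((i : ℝ) ^ 2 + (j : ℝ) ^ 2)⁻¹)
        - ∑ i ∈ Icc 1 n, (1 - c i) * ∑ j ∈ Icc 1 n, d j * ((i : ℝ) ^ 2 + (j : ℝ) ^ 2)⁻¹ := by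
    simp only [← sum_sub_distrib, ← sum_neg_distrib, mul_sum]
    refine sum_congr rfl fun i _ => sum_congr rfl fun j _ => by ring
  have hrest : |∑ i ∈ Icc 1 n, (1 - c i) * ∑ j ∈ Icc 1 n, d j * ((i : ℝ) ^ 2 + (j : ℝ) ^ 2)⁻¹|
      ≤ 2 * Bd * (π / 2) := calc
    _ ≤ ∑ i ∈ Icc 1 n, 2 * (Bd * (1 + (i : ℝ) ^ 2)⁻¹) := by
      refine (abs_sum_le_sum_abs _ _).trans (sum_le_sum fun i hi => ?_)
      have hi : (i : ℝ) ≠ 0 := by have := (mem_Icc.1 hi).1; positivity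
      rw [abs_mul, add_comm 1]
      gcongr
      · linarith [abs_sub (1 : ℝ) (c i), hc₁ i, abs_one (α := ℝ)]
      · exact abs_sum_Icc_mul_inv_sq_add_sq_le hd hi n
    _ ≤ 2 * Bd * (π / 2) := by
      rw [← mul_sum, ← mul_sum, ← mul_assoc]
      gcongr
      exact sum_Icc_inv_one_add_sq_le n
  rw [hsplit]
  have := abs_sum_Icc_mul_sum_Icc_inv_sq_add_sq_le hc n
  calc _ ≤ _ := abs_sub _ _
    _ ≤ Bc * (π / 2) + 2 * Bd * (π / 2) := by rw [abs_neg]; gcongr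
    _ = _ := by ring

theorem abs_sum_sum_sin_sq_mul_sin_sq_div_sub_log_le {x y : ℝ} (hx : x ∈ Set.Ioo 0 1)
    (hy : y ∈ Set.Ioo 0 1) (n : ℕ) :
    |∑ i ∈ Icc 1 n, ∑ j ∈ Icc 1 n,
        sin (π * i * x) ^ 2 * sin (π * j * y) ^ 2 / ((i : ℝ) ^ 2 + (j : ℝ) ^ 2) - π / 8 * log n|
      ≤ π / 8 * ((sin (π * x))⁻¹ + 2 * (sin (π * y))⁻¹) + 3 / 4 := by
  have hexpand : ∑ i ∈ Icc 1 n, ∑ j ∈ Icc 1 n,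
        sin (π * i * x) ^ 2 * sin (π * j * y) ^ 2 / ((i : ℝ) ^ 2 + (j : ℝ) ^ 2)
      = 1 / 4 * ∑ i ∈ Icc 1 n, ∑ j ∈ Icc 1 n, (1 - cos (i * (2 * π * x)))
          * (1 - cos (j * (2 * π * y))) * ((i : ℝ) ^ 2 + (j : ℝ) ^ 2)⁻¹ := by
    simp only [mul_sum, sin_sq_eq_half_sub]
    refine sum_congr rfl fun i _ => sum_congr rfl fun j _ => by ring_nf
  have hmixed := abs_sum_sum_one_sub_mul_one_sub_mul_inv_sq_add_sq_sub_le
    (abs_sum_cos_two_pi_mul_le hx) (abs_sum_cos_two_pi_mul_le hy) (fun i => abs_cos_le_one _) n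
  have hmain := abs_sum_sum_inv_sq_add_sq_sub_log_le n
  rw [hexpand]
  rw [abs_le] at hmixed hmain ⊢
  constructor <;> linarith [hmixed.1, hmixed.2, hmain.1, hmain.2]

theorem tendstoUniformlyOn_div_of_abs_sub_le {ι α : Type*} {l : Filter ι} {f : ι → α → ℝ}
    {g : ι → ℝ} {s : Set α} {C : ℝ} (hg : Tendsto g l atTop)
    (hfg : ∀ i, ∀ x ∈ s, |f i x - g i| ≤ C) :
    TendstoUniformlyOn (fun i x => f i x / g i) (fun _ => 1) l s := by
  rw [Metric.tendstoUniformlyOn_iff]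
  intro ε hε
  filter_upwards [hg.eventually_gt_atTop 0, hg.eventually_gt_atTop (C / ε)] with i hg₀ hgC x hx
  rw [dist_eq, one_sub_div hg₀.ne', abs_div, abs_of_pos hg₀, abs_sub_comm, div_lt_iff₀ hg₀]
  rw [div_lt_iff₀ hε] at hgC
  linarith [hfg i x hx]

theorem sine_square_sum_asymptotic
    (L : Set (ℝ × ℝ)) (hL : IsCompact L) (hL' : L ⊆ Set.Ioo 0 1 ×ˢ Set.Ioo 0 1) :
    TendstoUniformlyOn
      (fun (n : ℕ) (p : ℝ × ℝ) =>
        (∑ i ∈ Finset.Icc 1 n, ∑ j ∈ Finset.Icc 1 n,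
            Real.sin (Real.pi * i * p.1) ^ 2 * Real.sin (Real.pi * j * p.2) ^ 2 /
              ((i : ℝ) ^ 2 + (j : ℝ) ^ 2)) /
          (Real.pi / 8 * Real.log n))
      (fun _ => 1) atTop L := by
  have hcont : ContinuousOn
      (fun p : ℝ × ℝ => π / 8 * ((sin (π * p.1))⁻¹ + 2 * (sin (π * p.2))⁻¹) + 3 / 4) L := by
    have h₁ : ContinuousOn (fun p : ℝ × ℝ => (sin (π * p.1))⁻¹) L :=
      ContinuousOn.inv₀ (by fun_prop) fun p hp => (sin_pi_mul_pos (hL' hp).1).ne'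
    have h₂ : ContinuousOn (fun p : ℝ × ℝ => (sin (π * p.2))⁻¹) L :=
      ContinuousOn.inv₀ (by fun_prop) fun p hp => (sin_pi_mul_pos (hL' hp).2).ne'
    fun_prop
  obtain ⟨C, hC⟩ := hL.exists_bound_of_continuousOn hcont
  refine tendstoUniformlyOn_div_of_abs_sub_le (C := C)
    ((tendsto_log_atTop.comp tendsto_natCast_atTop_atTop).const_mul_atTop (by positivity))
    fun n p hp => ?_
  exact (abs_sum_sum_sin_sq_mul_sin_sq_div_sub_log_le (hL' hp).1 (hL' hp).2 n).trans
    ((le_abs_self _).trans (hC p hp))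
end

section
/- For z = (x,y) ∈ (0,1)², r > 0 with D(z,r) ⊆ (0,1)², and positive integers i, j, G_{ij}(z,r) = sin(πix) sin(πjy) · (πr² + E), where |E| ≤ C r⁴ (max(i,j))² for a universal constant C. In particular G_{ij}(z,r) = sin(πix)sin(πjy)(πr² + O(r⁴(i∨j)²)). -/
/-!
After translating the disk to the origin, the addition formula writes
`sin (πi(x+u)) sin (πj(y+v))` as `sin (πix) sin (πjy) cos (πiu) cos (πjv)` plus terms that are odd
under `v ↦ -v` or under `u ↦ -u`; these integrate to zero over the centred disk. What remains is
`sin (πix) sin (πjy)` times the integral of `cos (πiu) cos (πjv)`, which differs from the area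
`πr²` by at most `π³ (i ∨ j)² r⁴ / 2`, since `|cos s cos t - 1| ≤ (s² + t²) / 2`.
-/

open MeasureTheory Metric Real

theorem Continuous.integrableOn_ball {X G : Type*} [MetricSpace X] [ProperSpace X]
    [MeasurableSpace X] [OpensMeasurableSpace X] {μ : Measure X} [IsFiniteMeasureOnCompacts μ]
    [NormedAddCommGroup G] {f : X → G} (hf : Continuous f) (x : X) (r : ℝ) :
    IntegrableOn f (ball x r) μ :=
  (hf.continuousOn.integrableOn_compact (isCompact_closedBall x r)).mono_set
    ball_subset_closedBall

theorem setIntegral_ball_eq_setIntegral_ball_zero {E G : Type*} [NormedAddCommGroup E]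
    [MeasurableSpace E] [BorelSpace E] {μ : Measure E} [μ.IsAddLeftInvariant]
    [NormedAddCommGroup G] [NormedSpace ℝ G] (f : E → G) (z : E) (r : ℝ) :
    ∫ w in ball z r, f w ∂μ = ∫ w in ball 0 r, f (z + w) ∂μ := by
  have hpre : (z + ·) ⁻¹' ball z r = ball 0 r := by
    ext w; simp [dist_eq_norm]
  rw [← (measurePreserving_add_left μ z).setIntegral_preimage_emb
    (MeasurableEquiv.addLeft z).measurableEmbedding f (ball z r), hpre]

theorem setIntegral_eq_zero_of_comp_eq_neg {α G : Type*} [MeasurableSpace α] {μ : Measure α}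
    [NormedAddCommGroup G] [NormedSpace ℝ G] {e : α ≃ᵐ α} (he : MeasurePreserving e μ μ)
    {s : Set α} (hs : e ⁻¹' s = s) {f : α → G} (hf : ∀ x, f (e x) = -f x) :
    ∫ x in s, f x ∂μ = 0 := by
  have h := he.setIntegral_preimage_emb e.measurableEmbedding f s
  simp only [hs, hf, integral_neg] at h
  rw [eq_comm, eq_neg_iff_add_eq_zero, ← two_smul ℝ, smul_eq_zero] at h
  exact h.resolve_left two_ne_zero

theorem setIntegral_ball_zero_eq_zero_of_comp_eq_neg {E G : Type*} [NormedAddCommGroup E]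
    [InnerProductSpace ℝ E] [FiniteDimensional ℝ E] [MeasurableSpace E] [BorelSpace E]
    [NormedAddCommGroup G] [NormedSpace ℝ G] (e : E ≃ₗᵢ[ℝ] E) {f : E → G}
    (hf : ∀ x, f (e x) = -f x) (r : ℝ) :
    ∫ x in ball 0 r, f x = 0 :=
  setIntegral_eq_zero_of_comp_eq_neg (e := e.toMeasurableEquiv) e.measurePreserving
    (by simp) hf

theorem setIntegral_ball_zero_sin_add_mul_sin_add (a b p q r : ℝ) :
    ∫ w in ball (0 : ℂ) r, sin (a + p * w.re) * sin (b + q * w.im)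
      = sin a * sin b * ∫ w in ball (0 : ℂ) r, cos (p * w.re) * cos (q * w.im) := by
  have hsplit : ∀ w : ℂ, sin (a + p * w.re) * sin (b + q * w.im)
      = sin a * sin b * (cos (p * w.re) * cos (q * w.im))
        + (cos b * (sin (a + p * w.re) * sin (q * w.im))
          + cos a * sin b * (sin (p * w.re) * cos (q * w.im))) := by
    intro w; simp only [sin_add]; ring
  have hodd_im : ∫ w in ball (0 : ℂ) r, cos b * (sin (a + p * w.re) * sin (q * w.im)) = 0 :=
    setIntegral_ball_zero_eq_zero_of_comp_eq_neg Complex.conjLIE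
      (fun w ↦ by simp [Complex.conjLIE_apply, sin_neg]) r
  have hodd_re : ∫ w in ball (0 : ℂ) r, cos a * sin b * (sin (p * w.re) * cos (q * w.im)) = 0 :=
    setIntegral_ball_zero_eq_zero_of_comp_eq_neg (LinearIsometryEquiv.neg ℝ)
      (fun w ↦ by simp [sin_neg]) r
  simp_rw [hsplit]
  rw [integral_add, integral_add, hodd_im, hodd_re, integral_const_mul, add_zero, add_zero]
  all_goals exact Continuous.integrableOn_ball (by fun_prop) 0 r

theorem abs_cos_mul_cos_sub_one_le (s t : ℝ) : |cos s * cos t - 1| ≤ (s ^ 2 + t ^ 2) / 2 := by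
  have abs_cos_sub_one_le (x : ℝ) : |cos x - 1| ≤ x ^ 2 / 2 := by
    rw [abs_of_nonpos (by linarith [cos_le_one x])]
    linarith [one_sub_sq_div_two_le_cos (x := x)]
  calc |cos s * cos t - 1| = |cos s * (cos t - 1) + (cos s - 1)| := by ring_nf
    _ ≤ |cos s| * |cos t - 1| + |cos s - 1| := by rw [← abs_mul]; exact abs_add_le _ _
    _ ≤ 1 * (t ^ 2 / 2) + s ^ 2 / 2 := by
      gcongr
      · exact abs_cos_le_one s
      · exact abs_cos_sub_one_le t
      · exact abs_cos_sub_one_le s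
    _ = (s ^ 2 + t ^ 2) / 2 := by ring

theorem Complex.volume_real_ball (a : ℂ) {r : ℝ} (hr : 0 ≤ r) :
    volume.real (ball a r) = π * r ^ 2 := by
  simp [measureReal_def, hr, mul_comm]

theorem abs_setIntegral_ball_zero_cos_mul_cos_sub_le {p q K r : ℝ} (hp : p ^ 2 ≤ K)
    (hq : q ^ 2 ≤ K) (hr : 0 ≤ r) :
    |(∫ w in ball (0 : ℂ) r, cos (p * w.re) * cos (q * w.im)) - π * r ^ 2|
      ≤ K * π * r ^ 4 / 2 := by
  have hK : 0 ≤ K := (sq_nonneg p).trans hp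
  have hpoint : ∀ w ∈ ball (0 : ℂ) r, ‖cos (p * w.re) * cos (q * w.im) - 1‖ ≤ K * r ^ 2 / 2 := by
    intro w hw
    have hw2 : w.re ^ 2 + w.im ^ 2 ≤ r ^ 2 := by
      have hlt : ‖w‖ < r := by simpa using hw
      have := Complex.sq_norm w
      rw [Complex.normSq_apply] at this
      nlinarith [norm_nonneg w]
    calc ‖cos (p * w.re) * cos (q * w.im) - 1‖ ≤ ((p * w.re) ^ 2 + (q * w.im) ^ 2) / 2 :=
          abs_cos_mul_cos_sub_one_le _ _
      _ ≤ K * (w.re ^ 2 + w.im ^ 2) / 2 := by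
        rw [mul_pow, mul_pow, mul_add]; gcongr
      _ ≤ K * r ^ 2 / 2 := by gcongr
  have hdiff : (∫ w in ball (0 : ℂ) r, cos (p * w.re) * cos (q * w.im)) - π * r ^ 2
      = ∫ w in ball (0 : ℂ) r, (cos (p * w.re) * cos (q * w.im) - 1) := by
    rw [integral_sub (Continuous.integrableOn_ball (by fun_prop) 0 r)
      (Continuous.integrableOn_ball continuous_const 0 r), setIntegral_const,
      Complex.volume_real_ball 0 hr, smul_eq_mul, mul_one]
  rw [hdiff, ← Real.norm_eq_abs]
  calc _ ≤ K * r ^ 2 / 2 * volume.real (ball (0 : ℂ) r) :=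
        norm_setIntegral_le_of_norm_le_const measure_ball_lt_top hpoint
    _ = K * π * r ^ 4 / 2 := by rw [Complex.volume_real_ball 0 hr]; ring

theorem disk_sine_integral_expansion :
    ∃ C > 0, ∀ (z : ℂ) (r : ℝ), 0 < r →
      Metric.ball z r ⊆ {w : ℂ | w.re ∈ Set.Ioo (0 : ℝ) 1 ∧ w.im ∈ Set.Ioo (0 : ℝ) 1} →
      ∀ i j : ℕ, 1 ≤ i → 1 ≤ j →
        ∃ E : ℝ,
          (∫ w in Metric.ball z r,
              Real.sin (Real.pi * i * w.re) * Real.sin (Real.pi * j * w.im))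
            = Real.sin (Real.pi * i * z.re) * Real.sin (Real.pi * j * z.im) *
                (Real.pi * r ^ 2 + E) ∧
          |E| ≤ C * r ^ 4 * (max i j : ℝ) ^ 2 := by
  refine ⟨π ^ 3 / 2, by positivity, fun z r hr _ i j _ _ ↦ ?_⟩
  set I := ∫ w in ball (0 : ℂ) r, cos (π * i * w.re) * cos (π * j * w.im)
  refine ⟨I - π * r ^ 2, ?_, ?_⟩
  · rw [setIntegral_ball_eq_setIntegral_ball_zero]
    simp only [Complex.add_re, Complex.add_im, mul_add]
    rw [setIntegral_ball_zero_sin_add_mul_sin_add]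
    ring
  · have hi : (π * i) ^ 2 ≤ (π * max (i : ℝ) j) ^ 2 := by gcongr; exact le_max_left _ _
    have hj : (π * j) ^ 2 ≤ (π * max (i : ℝ) j) ^ 2 := by gcongr; exact le_max_right _ _
    calc |I - π * r ^ 2| ≤ (π * max (i : ℝ) j) ^ 2 * π * r ^ 4 / 2 :=
          abs_setIntegral_ball_zero_cos_mul_cos_sub_le hi hj hr.le
      _ = π ^ 3 / 2 * r ^ 4 * (max i j : ℝ) ^ 2 := by ring
end
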